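/- arXiv:2307.15586 — 7 statements merged into one kernel-verified Lean document; each statement's English description precedes it below -/
import Mathlib

section
/- With n = 2 agents, the average outcome x_j = (s_{1,j}+s_{2,j})/2 maximizes the egalitarian welfare: for every outcome x' ∈ Δ^m, max(d_1(x'), d_2(x')) ≥ max(d_1(x), d_2(x)), where d_i(y) = Σ_j |s_{i,j} − y_j|. -/
/-!
With `ℓ¹` distance `d`, both agents are at distance `d(s₁, s₂) / 2` from the average, while by the
triangle inequality `d(s₁, s₂) ≤ d(s₁, x') + d(s₂, x') ≤ 2 max (d(s₁, x'), d(s₂, x'))` for every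
outcome `x'`. This works in any normed affine space; the `ℓ¹` case is the space `PiLp 1`.
-/

def simplex {m : ℕ} (x : Fin m → ℝ) : Prop :=
  (∀ j, 0 ≤ x j) ∧ ∑ j, x j = 1

section Midpoint

variable {V P : Type*} [SeminormedAddCommGroup V] [NormedSpace ℝ V] [PseudoMetricSpace P]
  [NormedAddTorsor V P]

theorem dist_le_two_mul_max_dist (a b x : P) : dist a b ≤ 2 * max (dist a x) (dist b x) := by
  calc dist a b ≤ dist a x + dist b x := dist_triangle_right a b x
    _ ≤ 2 * max (dist a x) (dist b x) := by
      rw [two_mul]; exact add_le_add (le_max_left _ _) (le_max_right _ _)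

theorem max_dist_midpoint_le_max_dist (a b x : P) :
    max (dist a (midpoint ℝ a b)) (dist b (midpoint ℝ a b)) ≤ max (dist a x) (dist b x) := by
  rw [dist_left_midpoint, dist_right_midpoint, max_self, Real.norm_two]
  linarith [dist_le_two_mul_max_dist a b x]

end Midpoint

theorem sum_abs_sub_eq_dist_toLp_one {ι : Type*} [Fintype ι] (x y : ι → ℝ) :
    ∑ j, |x j - y j| = dist (WithLp.toLp 1 x) (WithLp.toLp 1 y) := by
  simp only [PiLp.dist_eq_of_L1, Real.dist_eq]

theorem avg_maximizes_egalitarian_general (m : ℕ) (s₁ s₂ x' : Fin m → ℝ) :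
    max (∑ j, |s₁ j - ((s₁ j + s₂ j) / 2)|) (∑ j, |s₂ j - ((s₁ j + s₂ j) / 2)|)
      ≤ max (∑ j, |s₁ j - x' j|) (∑ j, |s₂ j - x' j|) := by
  have h_avg : WithLp.toLp 1 (fun j => (s₁ j + s₂ j) / 2)
      = midpoint ℝ (WithLp.toLp 1 s₁) (WithLp.toLp 1 s₂) := by
    ext j
    simp only [midpoint_eq_smul_add, invOf_eq_inv, smul_add, PiLp.add_apply, PiLp.smul_apply,
      smul_eq_mul]
    ring
  simp only [sum_abs_sub_eq_dist_toLp_one, h_avg]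
  exact max_dist_midpoint_le_max_dist _ _ _

theorem avg_maximizes_egalitarian (m : ℕ) (s₁ s₂ x' : Fin m → ℝ)
    (hs₁ : simplex s₁) (hs₂ : simplex s₂) (hx' : simplex x') :
    max (∑ j, |s₁ j - ((s₁ j + s₂ j) / 2)|) (∑ j, |s₂ j - ((s₁ j + s₂ j) / 2)|)
      ≤ max (∑ j, |s₁ j - x' j|) (∑ j, |s₂ j - x' j|) :=
  avg_maximizes_egalitarian_general m s₁ s₂ x'
end

section
/- Pareto optimality implies range-respect: if an outcome x ∈ Δ^m for an instance (s_1,…,s_n) is not range-respecting (i.e., there exists j with x_j > max_i s_{i,j} or x_j < min_i s_{i,j}), then x is Pareto dominated by some outcome x' ∈ Δ^m (d_i(x') ≤ d_i(x) for all i, with strict inequality for some i). -/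
/-!
If every agent puts less mass than `x` on coordinate `a`, pick an agent `i₀`; since `x` and
`s i₀` both sum to `1`, some coordinate `b` has `x b < s i₀ b`. Moving a small mass `ε` from `a`
to `b` lowers every agent's `a`-term by exactly `ε` and raises its `b`-term by at most `ε`,
while agent `i₀` gains `ε` on both terms. The case where every agent puts more mass than `x` on a
coordinate is symmetric, with the transfer going the other way.
-/

open Finset

lemma exists_lt_of_sum_eq_of_lt {ι M : Type*} [Fintype ι] [AddCommMonoid M] [LinearOrder M]
    [IsOrderedCancelAddMonoid M] {f g : ι → M} (hsum : ∑ i, f i = ∑ i, g i) {j : ι}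
    (hj : f j < g j) : ∃ k, g k < f k := by
  by_contra! hle
  exact (sum_lt_sum (fun k _ ↦ hle k) ⟨j, mem_univ j, hj⟩).ne hsum

lemma exists_pos_forall_add_le {ι : Type*} [Finite ι] {f g : ι → ℝ} (h : ∀ i, f i < g i) :
    ∃ ε > 0, ∀ i, f i + ε ≤ g i := by
  cases isEmpty_or_nonempty ι
  · exact ⟨1, one_pos, fun i ↦ isEmptyElim i⟩
  · obtain ⟨i₀, hi₀⟩ := Finite.exists_min fun i ↦ g i - f i
    exact ⟨g i₀ - f i₀, sub_pos.2 (h i₀), fun i ↦ by linarith [hi₀ i]⟩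

lemma simplex_add_single_sub_single {m : ℕ} {x : Fin m → ℝ} (hx : simplex x) (a b : Fin m)
    {ε : ℝ} (hε : 0 ≤ ε) (hεa : ε ≤ x a) :
    simplex (x + Pi.single b ε - Pi.single a ε) := by
  refine ⟨fun j ↦ ?_, ?_⟩
  · have := hx.1 j
    simp only [Pi.sub_apply, Pi.add_apply, Pi.single_apply]
    split_ifs <;> subst_vars <;> linarith
  · simp only [Pi.sub_apply, Pi.add_apply, sum_sub_distrib, sum_add_distrib, sum_pi_single',
      mem_univ, if_true, hx.2]
    ring

lemma sum_abs_sub_add_single_sub_single {ι : Type*} [Fintype ι] [DecidableEq ι]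
    (t x : ι → ℝ) {a b : ι} (hab : a ≠ b) (ε : ℝ) :
    ∑ j, |t j - (x + Pi.single b ε - Pi.single a ε : ι → ℝ) j| = ∑ j, |t j - x j| +
      ((|t a - (x a - ε)| - |t a - x a|) + (|t b - (x b + ε)| - |t b - x b|)) := by
  rw [← sub_eq_iff_eq_add', ← sum_sub_distrib, Fintype.sum_eq_add a b hab]
  · simp [hab, hab.symm]
  · rintro j ⟨hja, hjb⟩
    simp [hja, hjb]

lemma abs_transfer_change_nonpos {ta tb xa xb ε : ℝ} (hε : 0 ≤ ε)
    (h : ta + ε ≤ xa ∨ xb + ε ≤ tb) :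
    (|ta - (xa - ε)| - |ta - xa|) + (|tb - (xb + ε)| - |tb - xb|) ≤ 0 := by
  rcases h with h | h <;>
  cases abs_cases (ta - (xa - ε)) <;> cases abs_cases (ta - xa) <;>
  cases abs_cases (tb - (xb + ε)) <;> cases abs_cases (tb - xb) <;> linarith

lemma abs_transfer_change_neg {ta tb xa xb ε : ℝ} (hε : 0 < ε) (ha : ta + ε ≤ xa)
    (hb : xb + ε ≤ tb) :
    (|ta - (xa - ε)| - |ta - xa|) + (|tb - (xb + ε)| - |tb - xb|) < 0 := by
  rw [abs_of_nonpos (by linarith), abs_of_nonpos (by linarith), abs_of_nonneg (by linarith),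
    abs_of_nonneg (by linarith)]
  linarith

lemma exists_pareto_improvement {n m : ℕ} (s : Fin n → Fin m → ℝ) (hs : ∀ i, simplex (s i))
    {x : Fin m → ℝ} (hx : simplex x) {a b : Fin m}
    (hall : (∀ i, s i a < x a) ∨ (∀ i, x b < s i b)) (i₀ : Fin n)
    (h₀a : s i₀ a < x a) (h₀b : x b < s i₀ b) :
    ∃ x' : Fin m → ℝ, simplex x' ∧
      (∀ i, ∑ j, |s i j - x' j| ≤ ∑ j, |s i j - x j|) ∧
      (∃ i, ∑ j, |s i j - x' j| < ∑ j, |s i j - x j|) := by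
  have hab : a ≠ b := by rintro rfl; linarith
  obtain ⟨ε₁, hε₁, hgap⟩ : ∃ ε > 0, ∀ i, s i a + ε ≤ x a ∨ x b + ε ≤ s i b := by
    rcases hall with h | h
    · obtain ⟨ε, hε, hgap⟩ := exists_pos_forall_add_le h
      exact ⟨ε, hε, fun i ↦ .inl (hgap i)⟩
    · obtain ⟨ε, hε, hgap⟩ := exists_pos_forall_add_le h
      exact ⟨ε, hε, fun i ↦ .inr (hgap i)⟩
  set ε := min ε₁ (min (x a - s i₀ a) (s i₀ b - x b))
  have hε : 0 < ε := lt_min hε₁ (lt_min (by linarith) (by linarith))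
  have hεε₁ : ε ≤ ε₁ := min_le_left _ _
  have h₀a' : s i₀ a + ε ≤ x a := by
    linarith [((min_le_right _ _).trans (min_le_left _ _) : ε ≤ x a - s i₀ a)]
  have h₀b' : x b + ε ≤ s i₀ b := by
    linarith [((min_le_right _ _).trans (min_le_right _ _) : ε ≤ s i₀ b - x b)]
  refine ⟨x + Pi.single b ε - Pi.single a ε,
    simplex_add_single_sub_single hx a b hε.le (by linarith [(hs i₀).1 a]), fun i ↦ ?_, i₀, ?_⟩
  · have hgap' : s i a + ε ≤ x a ∨ x b + ε ≤ s i b :=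
      (hgap i).imp (fun h ↦ by linarith) (fun h ↦ by linarith)
    rw [sum_abs_sub_add_single_sub_single _ _ hab]
    linarith [abs_transfer_change_nonpos hε.le hgap']
  · rw [sum_abs_sub_add_single_sub_single _ _ hab]
    linarith [abs_transfer_change_neg hε h₀a' h₀b']

theorem pareto_implies_range_respect (n m : ℕ) (hn : 1 ≤ n)
    (s : Fin n → Fin m → ℝ) (hs : ∀ i, simplex (s i))
    (x : Fin m → ℝ) (hx : simplex x)
    (hnotRR : ∃ j, (∀ i, s i j < x j) ∨ (∀ i, x j < s i j)) :
    ∃ x' : Fin m → ℝ, simplex x' ∧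
      (∀ i, ∑ j, |s i j - x' j| ≤ ∑ j, |s i j - x j|) ∧
      (∃ i, ∑ j, |s i j - x' j| < ∑ j, |s i j - x j|) := by
  obtain ⟨j, hj⟩ := hnotRR
  let i₀ : Fin n := ⟨0, hn⟩
  have hsum : ∑ k, s i₀ k = ∑ k, x k := by rw [(hs i₀).2, hx.2]
  rcases hj with hlow | hhigh
  · obtain ⟨k, hk⟩ := exists_lt_of_sum_eq_of_lt hsum (hlow i₀)
    exact exists_pareto_improvement s hs hx (.inl hlow) i₀ (hlow i₀) hk
  · obtain ⟨k, hk⟩ := exists_lt_of_sum_eq_of_lt hsum.symm (hhigh i₀)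
    exact exists_pareto_improvement s hs hx (.inr hhigh) i₀ hk (hhigh i₀)
end

section
/- With n = 2 agents, every range-respecting outcome is Pareto optimal: if min(s_{1,j},s_{2,j}) ≤ x_j ≤ max(s_{1,j},s_{2,j}) for all j, then no outcome x' ∈ Δ^m satisfies d_i(x') ≤ d_i(x) for both i with strict inequality for some i. -/
/-! A range-respecting `x` lies coordinatewise between `s₁` and `s₂`, so `d₁(x) + d₂(x)` equals
`‖s₁ - s₂‖₁`, which by the triangle inequality is a lower bound for `d₁(x') + d₂(x')` at every `x'`.
An outcome that weakly improves both distances and strictly improves one would push this sum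
below its minimum. -/

theorem abs_sub_add_abs_sub_eq_of_mem_uIcc {a b c : ℝ} (h : c ∈ Set.uIcc a b) :
    |a - c| + |b - c| = |a - b| := by
  have := dist_add_dist_of_mem_segment (segment_eq_uIcc a b ▸ h)
  rwa [Real.dist_eq, Real.dist_eq, Real.dist_eq, abs_sub_comm c] at this

theorem sum_abs_sub_add_sum_abs_sub_le_of_mem_uIcc {ι : Type*} [Fintype ι] {s₁ s₂ x : ι → ℝ}
    (hx : ∀ j, x j ∈ Set.uIcc (s₁ j) (s₂ j)) (y : ι → ℝ) :
    ∑ j, |s₁ j - x j| + ∑ j, |s₂ j - x j| ≤ ∑ j, |s₁ j - y j| + ∑ j, |s₂ j - y j| := by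
  simp only [← Finset.sum_add_distrib]
  refine Finset.sum_le_sum fun j _ ↦ ?_
  rw [abs_sub_add_abs_sub_eq_of_mem_uIcc (hx j)]
  simpa only [Real.dist_eq] using dist_triangle_right (s₁ j) (s₂ j) (y j)

theorem range_respect_implies_pareto_two_agents_general (m : ℕ)
    (s₁ s₂ : Fin m → ℝ)
    (x : Fin m → ℝ)
    (hRR : ∀ j, min (s₁ j) (s₂ j) ≤ x j ∧ x j ≤ max (s₁ j) (s₂ j)) :
    ¬ ∃ x' : Fin m → ℝ, simplex x' ∧
        (∑ j, |s₁ j - x' j| ≤ ∑ j, |s₁ j - x j|) ∧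
        (∑ j, |s₂ j - x' j| ≤ ∑ j, |s₂ j - x j|) ∧
        ((∑ j, |s₁ j - x' j| < ∑ j, |s₁ j - x j|) ∨
         (∑ j, |s₂ j - x' j| < ∑ j, |s₂ j - x j|)) := by
  rintro ⟨x', -, h₁, h₂, hlt⟩
  have hmin := sum_abs_sub_add_sum_abs_sub_le_of_mem_uIcc hRR x'
  rcases hlt with hlt | hlt <;> linarith

theorem range_respect_implies_pareto_two_agents (m : ℕ)
    (s₁ s₂ : Fin m → ℝ) (hs₁ : simplex s₁) (hs₂ : simplex s₂)
    (x : Fin m → ℝ) (hx : simplex x)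
    (hRR : ∀ j, min (s₁ j) (s₂ j) ≤ x j ∧ x j ≤ max (s₁ j) (s₂ j)) :
    ¬ ∃ x' : Fin m → ℝ, simplex x' ∧
        (∑ j, |s₁ j - x' j| ≤ ∑ j, |s₁ j - x j|) ∧
        (∑ j, |s₂ j - x' j| ≤ ∑ j, |s₂ j - x j|) ∧
        ((∑ j, |s₁ j - x' j| < ∑ j, |s₁ j - x j|) ∨
         (∑ j, |s₂ j - x' j| < ∑ j, |s₂ j - x j|)) :=
  range_respect_implies_pareto_two_agents_general m s₁ s₂ x hRR
end

section
/- With m = 2 candidates, every range-respecting outcome is Pareto optimal: if x ∈ Δ^2 satisfies min_i s_{i,j} ≤ x_j ≤ max_i s_{i,j} for j = 1,2, then for every x' ∈ Δ^2 with x' ≠ x there exists an agent i with d_i(x) < d_i(x'). -/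
lemma Fin.sum_abs_sub_two_of_sum_eq {y z : Fin 2 → ℝ} (h : ∑ j, y j = ∑ j, z j) :
    ∑ j, |y j - z j| = 2 * |y 0 - z 0| := by
  simp only [Fin.sum_univ_two] at h ⊢
  rw [show y 1 - z 1 = -(y 0 - z 0) by linarith, abs_neg]
  ring

lemma Fin.eq_of_sum_eq_of_apply_zero_eq {y z : Fin 2 → ℝ} (h : ∑ j, y j = ∑ j, z j)
    (h0 : y 0 = z 0) : y = z := by
  rw [Fin.sum_univ_two, h0] at h
  ext j
  fin_cases j
  · exact h0
  · simpa using h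

lemma exists_abs_sub_lt_abs_sub_of_between {ι : Type*} {f : ι → ℝ} {t t' : ℝ}
    (ht : (∃ i, f i ≤ t) ∧ (∃ i, t ≤ f i)) (hne : t ≠ t') :
    ∃ i, |f i - t| < |f i - t'| := by
  rcases hne.lt_or_gt with h | h
  · obtain ⟨i, hi⟩ := ht.1
    refine ⟨i, ?_⟩
    rw [abs_of_nonpos (by linarith), abs_of_nonpos (by linarith)]
    linarith
  · obtain ⟨i, hi⟩ := ht.2
    refine ⟨i, ?_⟩
    rw [abs_of_nonneg (by linarith), abs_of_nonneg (by linarith)]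
    linarith

theorem range_respect_implies_pareto_two_candidates_general (n : ℕ)
    (s : Fin n → Fin 2 → ℝ) (hs : ∀ i, simplex (s i))
    (x : Fin 2 → ℝ) (hx : simplex x)
    (hRR : ∀ j, (∃ i, s i j ≤ x j) ∧ (∃ i, x j ≤ s i j)) :
    ∀ x' : Fin 2 → ℝ, simplex x' → x' ≠ x →
      ∃ i, ∑ j, |s i j - x j| < ∑ j, |s i j - x' j| := by
  intro x' hx' hne
  have hsx i : ∑ j, s i j = ∑ j, x j := (hs i).2.trans hx.2.symm
  have hsx' i : ∑ j, s i j = ∑ j, x' j := (hs i).2.trans hx'.2.symm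
  have h0 : x 0 ≠ x' 0 := fun h =>
    hne (Fin.eq_of_sum_eq_of_apply_zero_eq (hx'.2.trans hx.2.symm) h.symm)
  obtain ⟨i, hi⟩ := exists_abs_sub_lt_abs_sub_of_between (hRR 0) h0
  refine ⟨i, ?_⟩
  rw [Fin.sum_abs_sub_two_of_sum_eq (hsx i), Fin.sum_abs_sub_two_of_sum_eq (hsx' i)]
  linarith

theorem range_respect_implies_pareto_two_candidates (n : ℕ) (hn : 1 ≤ n)
    (s : Fin n → Fin 2 → ℝ) (hs : ∀ i, simplex (s i))
    (x : Fin 2 → ℝ) (hx : simplex x)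
    (hRR : ∀ j, (∃ i, s i j ≤ x j) ∧ (∃ i, x j ≤ s i j)) :
    ∀ x' : Fin 2 → ℝ, simplex x' → x' ≠ x →
      ∃ i, ∑ j, |s i j - x j| < ∑ j, |s i j - x' j| :=
  range_respect_implies_pareto_two_candidates_general n s hs x hx hRR
end

section
/- The max rule satisfies reinforcement: let M_j = max_i s_{i,j}, M'_j = max_i s'_{i,j}, and suppose M_j / Σ_k M_k = M'_j / Σ_k M'_k for all j (both denominators are positive since the s_i sum to 1). Then for the combined instance, max over all agents of the j-th coordinate, normalized, equals M_j / Σ_k M_k for all j. -/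
theorem one_le_sum_of_simplex_le {m : ℕ} {x y : Fin m → ℝ} (hx : simplex x)
    (hxy : ∀ j, x j ≤ y j) : 1 ≤ ∑ j, y j :=
  hx.2 ▸ Finset.sum_le_sum fun j _ => hxy j

section Normalization

variable {ι : Type*} [Fintype ι] {a b : ι → ℝ}

theorem sum_div_sum_self_eq_one (ha : ∑ k, a k ≠ 0) : ∑ k, a k / ∑ k, a k = 1 := by
  rw [← Finset.sum_div, div_self ha]

theorem sum_ne_zero_of_div_sum_eq (hab : ∀ j, a j / ∑ k, a k = b j / ∑ k, b k)
    (ha : ∑ k, a k ≠ 0) : ∑ k, b k ≠ 0 := by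
  intro hb
  have h := sum_div_sum_self_eq_one ha
  simp only [hab, hb, div_zero, Finset.sum_const_zero] at h
  exact zero_ne_one h

theorem eq_mul_of_div_sum_eq (hab : ∀ j, a j / ∑ k, a k = b j / ∑ k, b k)
    (ha : ∑ k, a k ≠ 0) (j : ι) : b j = (∑ k, b k) / (∑ k, a k) * a j := by
  have hb := sum_ne_zero_of_div_sum_eq hab ha
  rw [div_mul_comm, hab j, div_mul_cancel₀ _ hb]

theorem mul_div_sum_mul (c : ℝ) (hc : c ≠ 0) (j : ι) :
    c * a j / ∑ k, c * a k = a j / ∑ k, a k := by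
  rw [← Finset.mul_sum, mul_div_mul_left _ _ hc]

theorem max_mul_div_sum_max_mul (ha : ∀ j, 0 ≤ a j) (c : ℝ) (j : ι) :
    max (a j) (c * a j) / ∑ k, max (a k) (c * a k) = a j / ∑ k, a k := by
  have hmax : ∀ k, max (a k) (c * a k) = max 1 c * a k := fun k => by
    rw [max_mul_of_nonneg _ _ (ha k), one_mul]
  simp only [hmax]
  exact mul_div_sum_mul _ (lt_of_lt_of_le one_pos (le_max_left 1 c)).ne' j

end Normalization

theorem max_reinforcement_general (n m : ℕ) (hn : 0 < n)
    (s : Fin n → Fin m → ℝ)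
    (hs : ∀ i, simplex (s i))
    (M M' : Fin m → ℝ)
    (hM : ∀ j, M j = Finset.univ.sup' (Finset.univ_nonempty_iff.mpr (Fin.pos_iff_nonempty.mp hn)) (fun i => s i j))
    (heq : ∀ j, M j / (∑ k, M k) = M' j / (∑ k, M' k)) :
    ∀ j, max (M j) (M' j) / (∑ k, max (M k) (M' k)) = M j / (∑ k, M k) := by
  have hle : ∀ j, s ⟨0, hn⟩ j ≤ M j := fun j => by
    rw [hM j]
    exact Finset.le_sup' (fun i => s i j) (Finset.mem_univ _)
  have hM_nonneg : ∀ j, 0 ≤ M j := fun j => ((hs ⟨0, hn⟩).1 j).trans (hle j)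
  have hS : ∑ k, M k ≠ 0 :=
    (one_pos.trans_le (one_le_sum_of_simplex_le (hs ⟨0, hn⟩) hle)).ne'
  have hM' : M' = fun j => (∑ k, M' k) / (∑ k, M k) * M j :=
    funext (eq_mul_of_div_sum_eq heq hS)
  intro j
  rw [hM']
  exact max_mul_div_sum_max_mul hM_nonneg _ j

theorem max_reinforcement (n n' m : ℕ) (hn : 0 < n) (hn' : 0 < n')
    (s : Fin n → Fin m → ℝ) (s' : Fin n' → Fin m → ℝ)
    (hs : ∀ i, simplex (s i)) (hs' : ∀ i, simplex (s' i))
    (M M' : Fin m → ℝ)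
    (hM : ∀ j, M j = Finset.univ.sup' (Finset.univ_nonempty_iff.mpr (Fin.pos_iff_nonempty.mp hn)) (fun i => s i j))
    (hM' : ∀ j, M' j = Finset.univ.sup' (Finset.univ_nonempty_iff.mpr (Fin.pos_iff_nonempty.mp hn')) (fun i => s' i j))
    (heq : ∀ j, M j / (∑ k, M k) = M' j / (∑ k, M' k)) :
    ∀ j, max (M j) (M' j) / (∑ k, max (M k) (M' k)) = M j / (∑ k, M k) :=
  max_reinforcement_general n m hn s hs M M' hM heq
end

section
/- Participation lemma: let s_i, x, x' ∈ Δ^m and suppose that s_{i,j} ≥ x'_j for all j with x'_j > x_j. Then Σ_j |s_{i,j} − x'_j| ≤ Σ_j |s_{i,j} − x_j|, i.e., agent i weakly prefers x' to x under ℓ1 disutility. -/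
section

variable {α ι : Type*} [AddCommGroup α] [LinearOrder α] [IsOrderedAddMonoid α]

lemma abs_sub_le_abs_sub_add_sub {s a b : α} (h : a < b → b ≤ s) :
    |s - b| ≤ |s - a| + (a - b) := by
  rcases lt_or_ge a b with hab | hba
  · calc |s - b| = (s - a) + (a - b) := by
          rw [abs_of_nonneg (sub_nonneg.2 (h hab))]; abel
      _ ≤ |s - a| + (a - b) := add_le_add_left (le_abs_self _) _
  · calc |s - b| = |(s - a) + (a - b)| := by rw [sub_add_sub_cancel]
      _ ≤ |s - a| + |a - b| := abs_add_le _ _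
      _ = |s - a| + (a - b) := by rw [abs_of_nonneg (sub_nonneg.2 hba)]

lemma Finset.sum_abs_sub_le_of_sum_eq (t : Finset ι) {s a b : ι → α}
    (hsum : ∑ j ∈ t, a j = ∑ j ∈ t, b j) (h : ∀ j ∈ t, a j < b j → b j ≤ s j) :
    ∑ j ∈ t, |s j - b j| ≤ ∑ j ∈ t, |s j - a j| :=
  calc ∑ j ∈ t, |s j - b j| ≤ ∑ j ∈ t, (|s j - a j| + (a j - b j)) :=
        Finset.sum_le_sum fun j hj => abs_sub_le_abs_sub_add_sub (h j hj)
    _ = ∑ j ∈ t, |s j - a j| := by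
        rw [Finset.sum_add_distrib, Finset.sum_sub_distrib, hsum, sub_self, add_zero]

end

theorem participation_lemma_general (m : ℕ) (sᵢ x x' : Fin m → ℝ)
    (hx : simplex x) (hx' : simplex x')
    (h : ∀ j, x j < x' j → x' j ≤ sᵢ j) :
    ∑ j, |sᵢ j - x' j| ≤ ∑ j, |sᵢ j - x j| :=
  Finset.univ.sum_abs_sub_le_of_sum_eq (hx.2.trans hx'.2.symm) fun j _ => h j

theorem participation_lemma (m : ℕ) (sᵢ x x' : Fin m → ℝ)
    (hsᵢ : simplex sᵢ) (hx : simplex x) (hx' : simplex x')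
    (h : ∀ j, x j < x' j → x' j ≤ sᵢ j) :
    ∑ j, |sᵢ j - x' j| ≤ ∑ j, |sᵢ j - x j| :=
  participation_lemma_general m sᵢ x x' hx hx' h
end

section
/- With m = 3 candidates and any number of agents, the coordinate-wise median rule is range-respecting: if m_j = med_i s_{i,j} for j = 1,2,3 and M = m_1+m_2+m_3 > 0, then for every j, min_i s_{i,j} ≤ m_j/M ≤ max_i s_{i,j}. -/
noncomputable def med (l : List ℝ) : ℝ :=
  let srt := l.insertionSort (· ≤ ·)
  if l.length % 2 = 1 then srt.getD (l.length / 2) 0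
  else (srt.getD (l.length / 2 - 1) 0 + srt.getD (l.length / 2) 0) / 2

/-!
Fix a candidate with column `y`, and let `a ≤ b` be the least and largest entries of `y`; its
median `m` lies in `[a, b]`. Every median is the mean of the order statistics of ranks `(n - 1) / 2`
and `n / 2`, which add up to `n - 1`. By pigeonhole, if `k + l < n` then some agent's entries in two
columns are at least the `k`-th order statistic of the first and the `l`-th of the second, and
symmetrically from below if `k + l ≥ n - 1`. Hence the sum of two medians lies between the least
and largest entries of the pointwise sum of their columns. The other two columns add up to `1 - y`,
so their medians add up to some `r ∈ [1 - b, 1 - a]`, and then `a ≤ m / (m + r) ≤ b`.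
-/

open Finset

theorem Fin.card_filter_univ_eq_countP_ofFn {α : Type*} {n : ℕ} (y : Fin n → α) (p : α → Prop)
    [DecidablePred p] : #{i | p (y i)} = (List.ofFn y).countP (p ·) := by
  induction n with
  | zero => simp
  | succ n ih =>
    rw [Fin.card_filter_univ_succ', List.ofFn_succ, List.countP_cons, ih, add_comm]
    simp

namespace List

variable {α : Type*} [LinearOrder α] {l : List α} {k : ℕ}

theorem length_sub_le_countP_getElem_le (hl : l.Pairwise (· ≤ ·)) (hk : k < l.length) :
    l.length - k ≤ l.countP (decide <| l[k] ≤ ·) := by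
  have hdrop : ∀ a ∈ l.drop k, l[k] ≤ a := by
    have hsorted := hl.sublist (drop_sublist k l)
    rw [drop_eq_getElem_cons hk, pairwise_cons] at hsorted
    rw [drop_eq_getElem_cons hk]
    exact forall_mem_cons.2 ⟨le_rfl, hsorted.1⟩
  calc l.length - k = (l.drop k).countP (decide <| l[k] ≤ ·) := by
        rw [countP_eq_length.2 (by simpa using hdrop), length_drop]
    _ ≤ l.countP (decide <| l[k] ≤ ·) := (drop_sublist k l).countP_le

theorem add_one_le_countP_le_getElem (hl : l.Pairwise (· ≤ ·)) (hk : k < l.length) :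
    k + 1 ≤ l.countP (decide <| · ≤ l[k]) := by
  have htake : ∀ a ∈ l.take (k + 1), a ≤ l[k] := by
    have hsorted := hl.sublist (take_sublist (k + 1) l)
    rw [take_succ_eq_append_getElem hk, pairwise_append] at hsorted
    rw [take_succ_eq_append_getElem hk]
    intro a ha
    rcases mem_append.1 ha with ha | ha
    · exact hsorted.2.2 a ha _ (mem_singleton_self _)
    · rw [mem_singleton.1 ha]
  calc k + 1 = (l.take (k + 1)).countP (decide <| · ≤ l[k]) := by
        rw [countP_eq_length.2 (by simpa using htake), length_take]
        omega
    _ ≤ l.countP (decide <| · ≤ l[k]) := (take_sublist _ l).countP_le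

end List

/-- The `k`-th smallest entry of `y`, counting from `0`. -/
noncomputable def orderStat {n : ℕ} (y : Fin n → ℝ) (k : ℕ) : ℝ :=
  ((List.ofFn y).insertionSort (· ≤ ·)).getD k 0

section OrderStat

variable {n : ℕ} (y z : Fin n → ℝ) {k l : ℕ}

theorem med_ofFn_eq_orderStat :
    med (List.ofFn y) = (orderStat y ((n - 1) / 2) + orderStat y (n / 2)) / 2 := by
  simp only [med, orderStat, List.length_ofFn]
  split_ifs
  · rw [show (n - 1) / 2 = n / 2 by omega, add_self_div_two]
  · rw [show n / 2 - 1 = (n - 1) / 2 by omega]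

theorem orderStat_eq_getElem (hk : k < n) :
    orderStat y k = ((List.ofFn y).insertionSort (· ≤ ·))[k]'(by simpa using hk) :=
  List.getD_eq_getElem _ _ _

theorem exists_eq_orderStat (hk : k < n) : ∃ i, y i = orderStat y k := by
  rw [orderStat_eq_getElem y hk, ← List.mem_ofFn]
  exact (List.perm_insertionSort (· ≤ ·) (List.ofFn y)).mem_iff.1 (List.getElem_mem _)

theorem card_orderStat_le (hk : k < n) : n - k ≤ #{i | orderStat y k ≤ y i} := by
  rw [Fin.card_filter_univ_eq_countP_ofFn,
    ← (List.perm_insertionSort (· ≤ ·) (List.ofFn y)).countP_eq, orderStat_eq_getElem y hk]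
  simpa using List.length_sub_le_countP_getElem_le
    (List.pairwise_insertionSort (· ≤ ·) (List.ofFn y)) (by simpa using hk)

theorem card_le_orderStat (hk : k < n) : k + 1 ≤ #{i | y i ≤ orderStat y k} := by
  rw [Fin.card_filter_univ_eq_countP_ofFn y (· ≤ orderStat y k),
    ← (List.perm_insertionSort (· ≤ ·) (List.ofFn y)).countP_eq, orderStat_eq_getElem y hk]
  exact List.add_one_le_countP_le_getElem (List.pairwise_insertionSort _ _) (by simpa using hk)

theorem exists_orderStat_add_orderStat_le (hkl : k + l < n) :
    ∃ i, orderStat y k + orderStat z l ≤ y i + z i := by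
  have hcard : #(univ : Finset (Fin n)) <
      #{i | orderStat y k ≤ y i} + #{i | orderStat z l ≤ z i} := by
    have := card_orderStat_le y (k := k) (by omega)
    have := card_orderStat_le z (k := l) (by omega)
    rw [card_univ, Fintype.card_fin]
    omega
  obtain ⟨i, hi⟩ :=
    inter_nonempty_of_card_lt_card_add_card (filter_subset _ _) (filter_subset _ _) hcard
  simp only [mem_inter, mem_filter] at hi
  exact ⟨i, add_le_add hi.1.2 hi.2.2⟩

theorem exists_add_le_orderStat_add_orderStat (hk : k < n) (hl : l < n) (hkl : n ≤ k + l + 1) :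
    ∃ i, y i + z i ≤ orderStat y k + orderStat z l := by
  have hcard : #(univ : Finset (Fin n)) <
      #{i | y i ≤ orderStat y k} + #{i | z i ≤ orderStat z l} := by
    have := card_le_orderStat y hk
    have := card_le_orderStat z hl
    rw [card_univ, Fintype.card_fin]
    omega
  obtain ⟨i, hi⟩ :=
    inter_nonempty_of_card_lt_card_add_card (filter_subset _ _) (filter_subset _ _) hcard
  simp only [mem_inter, mem_filter] at hi
  exact ⟨i, add_le_add hi.1.2 hi.2.2⟩

variable [NeZero n]

theorem med_ofFn_mem_Icc :
    med (List.ofFn y) ∈ Set.Icc (univ.inf' univ_nonempty y) (univ.sup' univ_nonempty y) := by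
  have hn := NeZero.pos n
  obtain ⟨i, hi⟩ := exists_eq_orderStat y (k := (n - 1) / 2) (by omega)
  obtain ⟨j, hj⟩ := exists_eq_orderStat y (k := n / 2) (by omega)
  have := inf'_le y (mem_univ i)
  have := inf'_le y (mem_univ j)
  have := le_sup' y (mem_univ i)
  have := le_sup' y (mem_univ j)
  rw [med_ofFn_eq_orderStat]
  constructor <;> linarith

theorem med_add_med_le_sup' :
    med (List.ofFn y) + med (List.ofFn z) ≤ univ.sup' univ_nonempty (fun i => y i + z i) := by
  have hn := NeZero.pos n
  obtain ⟨i, hi⟩ :=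
    exists_orderStat_add_orderStat_le y z (k := (n - 1) / 2) (l := n / 2) (by omega)
  obtain ⟨j, hj⟩ :=
    exists_orderStat_add_orderStat_le y z (k := n / 2) (l := (n - 1) / 2) (by omega)
  have := le_sup' (fun i => y i + z i) (mem_univ i)
  have := le_sup' (fun i => y i + z i) (mem_univ j)
  rw [med_ofFn_eq_orderStat, med_ofFn_eq_orderStat]
  linarith

theorem inf'_le_med_add_med :
    univ.inf' univ_nonempty (fun i => y i + z i) ≤ med (List.ofFn y) + med (List.ofFn z) := by
  have hn := NeZero.pos n
  obtain ⟨i, hi⟩ := exists_add_le_orderStat_add_orderStat y z (k := (n - 1) / 2) (l := n / 2)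
    (by omega) (by omega) (by omega)
  obtain ⟨j, hj⟩ := exists_add_le_orderStat_add_orderStat y z (k := n / 2) (l := (n - 1) / 2)
    (by omega) (by omega) (by omega)
  have := inf'_le (fun i => y i + z i) (mem_univ i)
  have := inf'_le (fun i => y i + z i) (mem_univ j)
  rw [med_ofFn_eq_orderStat, med_ofFn_eq_orderStat]
  linarith

end OrderStat

theorem div_add_mem_Icc {a b m r : ℝ} (ha : 0 ≤ a) (hb : b ≤ 1) (hm : m ∈ Set.Icc a b)
    (hr : r ∈ Set.Icc (1 - b) (1 - a)) (hmr : 0 < m + r) : m / (m + r) ∈ Set.Icc a b := by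
  obtain ⟨ham, hmb⟩ := hm
  obtain ⟨hbr, hra⟩ := hr
  constructor
  · rw [le_div_iff₀ hmr]
    nlinarith [mul_le_mul_of_nonneg_left hra ha,
      mul_le_mul_of_nonneg_right ham (by linarith : 0 ≤ 1 - a)]
  · rw [div_le_iff₀ hmr]
    nlinarith [mul_le_mul_of_nonneg_left hbr (by linarith : 0 ≤ b),
      mul_le_mul_of_nonneg_right hmb (by linarith : 0 ≤ 1 - b)]

theorem med_div_mem_Icc_of_add_eq_one {n : ℕ} [NeZero n] {y z w : Fin n → ℝ}
    (hy : ∀ i, 0 ≤ y i) (hz : ∀ i, 0 ≤ z i) (hw : ∀ i, 0 ≤ w i)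
    (hsum : ∀ i, y i + (z i + w i) = 1)
    (hM : 0 < med (List.ofFn y) + (med (List.ofFn z) + med (List.ofFn w))) :
    med (List.ofFn y) / (med (List.ofFn y) + (med (List.ofFn z) + med (List.ofFn w))) ∈
      Set.Icc (univ.inf' univ_nonempty y) (univ.sup' univ_nonempty y) := by
  refine div_add_mem_Icc (le_inf' _ _ fun i _ => hy i) (sup'_le _ _ fun i _ => ?_)
    (med_ofFn_mem_Icc y) ⟨(le_inf' _ _ fun i _ => ?_).trans (inf'_le_med_add_med z w),
      (med_add_med_le_sup' z w).trans (sup'_le _ _ fun i _ => ?_)⟩ hM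
  · linarith [hsum i, hz i, hw i]
  · linarith [hsum i, le_sup' y (mem_univ i)]
  · linarith [hsum i, inf'_le y (mem_univ i)]

theorem Fin.sum_univ_three_eq_rotate {M : Type*} [AddCommMonoid M] (f : Fin 3 → M) (j : Fin 3) :
    ∑ k, f k = f j + (f (j + 1) + f (j + 2)) := by
  rw [Fin.sum_univ_three]
  fin_cases j <;> simp only [Fin.isValue, Fin.zero_eta, Fin.mk_one, Fin.reduceFinMk,
    Fin.reduceAdd, zero_add] <;> abel

theorem median_range_respecting_three_candidates (n : ℕ) (hn : 0 < n)
    (s : Fin n → Fin 3 → ℝ) (hs : ∀ i, simplex (s i))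
    (mm : Fin 3 → ℝ)
    (hmm : ∀ j, mm j = med (List.ofFn (fun i => s i j)))
    (hM : 0 < mm 0 + mm 1 + mm 2) :
    ∀ j, (Finset.univ.inf' (Finset.univ_nonempty_iff.mpr (Fin.pos_iff_nonempty.mp hn)) (fun i => s i j))
            ≤ mm j / (mm 0 + mm 1 + mm 2) ∧
         mm j / (mm 0 + mm 1 + mm 2) ≤
           (Finset.univ.sup' (Finset.univ_nonempty_iff.mpr (Fin.pos_iff_nonempty.mp hn)) (fun i => s i j)) := by
  have : NeZero n := ⟨hn.ne'⟩
  intro j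
  rw [← Fin.sum_univ_three, Fin.sum_univ_three_eq_rotate mm j] at hM ⊢
  simp only [hmm] at hM ⊢
  refine med_div_mem_Icc_of_add_eq_one (fun i => (hs i).1 j) (fun i => (hs i).1 _)
    (fun i => (hs i).1 _) (fun i => ?_) hM
  rw [← Fin.sum_univ_three_eq_rotate (s i) j, (hs i).2]
end
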